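/- arXiv:math/0503047 — 5 statements merged into one kernel-verified Lean document; each statement's English description precedes it below -/
import Mathlib

section
/- Let β be a Pisot number (a real algebraic integer β > 1 all of whose other Galois conjugates lie in the open unit disc of ℂ). If the number field ℚ(β) is not totally real, then the field ℚ(β + β⁻¹) is not totally real. -/
/-!
Let `z` be a non-real conjugate of `β`. Since `β⁻¹` is a rational polynomial in `β`, and the same
polynomial gives `z⁻¹` at `z`, the number `z + z⁻¹` is a conjugate of `β + β⁻¹`. Its imaginary part
is `Im z · (1 - |z|⁻²)`, which is nonzero because `z` is not real and `0 < |z| < 1`.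
-/

/-- A Pisot number: a real algebraic integer `β > 1` all of whose Galois conjugates
(roots of its minimal polynomial over `ℚ`) other than `β` itself lie in the open unit disc. -/
def IsPisot (β : ℝ) : Prop :=
  IsIntegral ℤ β ∧ 1 < β ∧
    ∀ z : ℂ, Polynomial.aeval z (minpoly ℚ β) = 0 → z ≠ (β : ℂ) → ‖z‖ < 1

/-- For a real algebraic number `x`, the field `ℚ(x)` is totally real iff every complex
root of the minimal polynomial of `x` over `ℚ` (i.e. every embedding of `ℚ(x)` into `ℂ`)
is real. -/
def AdjoinIsTotallyReal (x : ℝ) : Prop :=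
  ∀ z : ℂ, Polynomial.aeval z (minpoly ℚ x) = 0 → z.im = 0

open Polynomial

section Conjugates

variable {F A K : Type*} [Field F] [Field A] [Field K] [Algebra F A] [Algebra F K]

-- Read off from `m = X * m.divX + C (m.coeff 0)`: one polynomial inverts every root of `m`.
lemma aeval_inv_eq_of_aeval_eq_zero {m : F[X]} (h0 : m.coeff 0 ≠ 0) {w : K}
    (hw : aeval w m = 0) : aeval w (C (-(m.coeff 0)⁻¹) * m.divX) = w⁻¹ := by
  have hc : algebraMap F K (m.coeff 0) ≠ 0 := by simpa using h0
  have hdecomp := congrArg (aeval w) (X_mul_divX_add m)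
  rw [map_add, map_mul, aeval_X, aeval_C, hw] at hdecomp
  have hwd : w * aeval w m.divX = -algebraMap F K (m.coeff 0) := by linear_combination hdecomp
  refine eq_inv_of_mul_eq_one_right ?_
  rw [map_mul, aeval_C, map_neg, map_inv₀, mul_left_comm, hwd, neg_mul_neg, inv_mul_cancel₀ hc]

lemma aeval_minpoly_aeval_eq_zero (x : A) {w : K} (hw : aeval w (minpoly F x) = 0) (q : F[X]) :
    aeval (aeval w q) (minpoly F (aeval x q)) = 0 := by
  obtain ⟨r, hr⟩ := minpoly.dvd F x (p := (minpoly F (aeval x q)).comp q)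
    (by rw [aeval_comp, minpoly.aeval])
  rw [← aeval_comp, hr, map_mul, hw, zero_mul]

lemma aeval_add_inv_minpoly_add_inv_eq_zero {x : A} (hx : IsIntegral F x) (hx0 : x ≠ 0) {w : K}
    (hw : aeval w (minpoly F x) = 0) : aeval (w + w⁻¹) (minpoly F (x + x⁻¹)) = 0 := by
  have h0 := minpoly.coeff_zero_ne_zero hx hx0
  have h := aeval_minpoly_aeval_eq_zero x hw
    (X + C (-((minpoly F x).coeff 0)⁻¹) * (minpoly F x).divX)
  rwa [map_add, map_add, aeval_X, aeval_X, aeval_inv_eq_of_aeval_eq_zero h0 hw,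
    aeval_inv_eq_of_aeval_eq_zero h0 (minpoly.aeval F x)] at h

end Conjugates

lemma Complex.im_add_inv (z : ℂ) : (z + z⁻¹).im = z.im * (1 - (normSq z)⁻¹) := by
  rw [add_im, inv_im]
  ring

lemma Complex.im_add_inv_ne_zero {z : ℂ} (hz : z.im ≠ 0) (hz1 : ‖z‖ ≠ 1) : (z + z⁻¹).im ≠ 0 := by
  have hn : normSq z ≠ 1 := by
    rwa [normSq_eq_norm_sq, ne_eq, pow_eq_one_iff_of_nonneg (norm_nonneg z) two_ne_zero]
  rw [im_add_inv]
  exact mul_ne_zero hz (sub_ne_zero.mpr (Ne.symm (inv_ne_one.mpr hn)))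

theorem pisot_not_totallyReal_add_inv (β : ℝ) (hβ : IsPisot β)
    (h : ¬ AdjoinIsTotallyReal β) : ¬ AdjoinIsTotallyReal (β + β⁻¹) := by
  obtain ⟨hint, hβ1, hconj⟩ := hβ
  simp only [AdjoinIsTotallyReal, not_forall] at h ⊢
  obtain ⟨z, hz, hzim⟩ := h
  have hzβ : z ≠ (β : ℂ) := fun he => hzim (by simp [he])
  exact ⟨z + z⁻¹,
    aeval_add_inv_minpoly_add_inv_eq_zero hint.tower_top (zero_lt_one.trans hβ1).ne' hz,
    Complex.im_add_inv_ne_zero hzim (hconj z hz hzβ).ne⟩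
end

section
/- For every integer n ≥ 2, the polynomial Pₙ(X) = Xⁿ − X^{n−1} − X^{n−2} − ⋯ − X − 1 has exactly 2 real roots if n is even and exactly 1 real root if n is odd. -/
open Polynomial Finset

/-!
Since `(X - 1) * Pₙ = Qₙ := X^(n+1) - 2 * X^n + 1` and `Pₙ(1) = 1 - n ≠ 0`, the real roots of `Pₙ`
are the zeros of `Qₙ` other than `1`. As `Qₙ'(x) = x^(n-1) * ((n+1) * x - 2n)`, `Qₙ` decreases on
`[0, 2n/(n+1)]`, which contains the zero `1`, and increases afterwards, where `Qₙ(2) = 1 > 0`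
forces exactly one more zero. On `(-∞, 0]`, `Qₙ > 0` for odd `n`, while for even `n` it increases
from `Qₙ(-1) = -2` to `Qₙ(0) = 1` and so has exactly one zero there.
-/

def Q {R : Type*} [CommRing R] (n : ℕ) (x : R) : R := x ^ (n + 1) - 2 * x ^ n + 1

theorem sub_one_mul_pow_sub_geom_sum {R : Type*} [CommRing R] (x : R) (n : ℕ) :
    (x - 1) * (x ^ n - ∑ i ∈ range n, x ^ i) = Q n x := by
  unfold Q
  linear_combination -geom_sum_mul x n

theorem pow_sub_geom_sum_eq_zero_iff {K : Type*} [Field K] [CharZero K] {n : ℕ} (hn : 2 ≤ n)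
    (x : K) : x ^ n - ∑ i ∈ range n, x ^ i = 0 ↔ Q n x = 0 ∧ x ≠ 1 := by
  rw [← sub_one_mul_pow_sub_geom_sum, mul_eq_zero, sub_eq_zero (a := x)]
  constructor
  · intro h
    refine ⟨Or.inr h, ?_⟩
    rintro rfl
    simp only [one_pow, sum_const, card_range, nsmul_one, sub_eq_zero, eq_comm (a := (1 : K)),
      Nat.cast_eq_one] at h
    omega
  · rintro ⟨h | h, hx⟩
    exacts [absurd h hx, h]

theorem Q_one {R : Type*} [CommRing R] (n : ℕ) : Q n (1 : R) = 0 := by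
  simp [Q]; ring

theorem continuous_Q (n : ℕ) : Continuous (Q n : ℝ → ℝ) := by
  unfold Q; fun_prop

theorem hasDerivAt_Q {n : ℕ} (hn : n ≠ 0) (x : ℝ) :
    HasDerivAt (Q n) (x ^ (n - 1) * ((n + 1) * x - 2 * n)) x := by
  refine (((hasDerivAt_pow (n + 1) x).sub ((hasDerivAt_pow n x).const_mul 2)).add_const 1
    ).congr_deriv ?_
  obtain ⟨m, rfl⟩ := Nat.exists_eq_succ_of_ne_zero hn
  simp only [Nat.succ_sub_one]
  push_cast
  ring

theorem strictAntiOn_Q {n : ℕ} (hn : n ≠ 0) :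
    StrictAntiOn (Q n) (Set.Icc 0 (2 * n / (n + 1) : ℝ)) := by
  refine strictAntiOn_of_deriv_neg (convex_Icc _ _) (continuous_Q n).continuousOn fun x hx => ?_
  rw [interior_Icc] at hx
  rw [(hasDerivAt_Q hn x).deriv]
  have hxc := hx.2
  rw [lt_div_iff₀ (by positivity)] at hxc
  exact mul_neg_of_pos_of_neg (pow_pos hx.1 _) (by linarith)

theorem strictMonoOn_Q {n : ℕ} (hn : n ≠ 0) :
    StrictMonoOn (Q n) (Set.Ici (2 * n / (n + 1) : ℝ)) := by
  refine strictMonoOn_of_deriv_pos (convex_Ici _) (continuous_Q n).continuousOn fun x hx => ?_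
  rw [interior_Ici] at hx
  rw [(hasDerivAt_Q hn x).deriv]
  have hxc : 2 * n / (n + 1) < x := hx
  have hx0 : 0 < x := (by positivity : (0 : ℝ) ≤ 2 * n / (n + 1)).trans_lt hxc
  rw [div_lt_iff₀ (by positivity)] at hxc
  exact mul_pos (pow_pos hx0 _) (by linarith)

theorem strictMonoOn_Q_Iic_of_even {n : ℕ} (hn : n ≠ 0) (he : Even n) :
    StrictMonoOn (Q n) (Set.Iic (0 : ℝ)) := by
  refine strictMonoOn_of_deriv_pos (convex_Iic _) (continuous_Q n).continuousOn fun x hx => ?_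
  rw [interior_Iic] at hx
  rw [(hasDerivAt_Q hn x).deriv]
  have hx : x < 0 := hx
  have hodd : Odd (n - 1) := Nat.Even.sub_odd (by omega) he odd_one
  exact mul_pos_of_neg_of_neg (hodd.pow_neg hx) (by nlinarith)

theorem Q_pos_of_odd {n : ℕ} (ho : Odd n) {x : ℝ} (hx : x ≤ 0) : 0 < Q n x := by
  have h₁ : x ^ n ≤ 0 := ho.pow_nonpos hx
  have h₂ : 0 ≤ x ^ (n + 1) := ho.add_one.pow_nonneg x
  unfold Q; linarith

theorem exists_Q_eq_zero_iff_of_pos {n : ℕ} (hn : 2 ≤ n) :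
    ∃ b : ℝ, 1 < b ∧ ∀ x, 0 < x → (Q n x = 0 ↔ x = 1 ∨ x = b) := by
  set c : ℝ := 2 * n / (n + 1) with hc
  have hn' : (2 : ℝ) ≤ n := by exact_mod_cast hn
  have h1c : 1 < c := by rw [hc, lt_div_iff₀ (by positivity)]; linarith
  have hc2 : c < 2 := by rw [hc, div_lt_iff₀ (by positivity)]; linarith
  have hanti := strictAntiOn_Q (n := n) (by omega)
  have hmono := strictMonoOn_Q (n := n) (by omega)
  have hQc : Q n c < 0 := Q_one (R := ℝ) n ▸ hanti ⟨zero_le_one, h1c.le⟩ ⟨by linarith, le_rfl⟩ h1c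
  have hQ2 : Q n (2 : ℝ) = 1 := by unfold Q; ring
  obtain ⟨b, ⟨hcb, -⟩, hQb⟩ := intermediate_value_Ioo hc2.le (continuous_Q n).continuousOn
    (show (0 : ℝ) ∈ Set.Ioo (Q n c) (Q n 2) by rw [hQ2]; exact ⟨hQc, one_pos⟩)
  refine ⟨b, h1c.trans hcb, fun x hx => ⟨fun hQx => ?_, ?_⟩⟩
  · rcases le_total x c with hxc | hxc
    · exact .inl <| hanti.injOn ⟨hx.le, hxc⟩ ⟨zero_le_one, h1c.le⟩ (hQx.trans (Q_one n).symm)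
    · exact .inr <| hmono.injOn hxc (Set.mem_Ici.mpr hcb.le) (hQx.trans hQb.symm)
  · rintro (rfl | rfl)
    exacts [Q_one n, hQb]

theorem exists_Q_eq_zero_iff_of_nonpos_of_even {n : ℕ} (hn : n ≠ 0) (he : Even n) :
    ∃ a : ℝ, a < 0 ∧ ∀ x ≤ 0, (Q n x = 0 ↔ x = a) := by
  have hmono := strictMonoOn_Q_Iic_of_even hn he
  have hQ0 : Q n (0 : ℝ) = 1 := by simp [Q, hn]
  have hQm1 : Q n (-1 : ℝ) = -2 := by
    simp only [Q, he.neg_one_pow, he.add_one.neg_one_pow]; norm_num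
  obtain ⟨a, ⟨-, ha⟩, hQa⟩ := intermediate_value_Ioo (by norm_num) (continuous_Q n).continuousOn
    (show (0 : ℝ) ∈ Set.Ioo (Q n (-1)) (Q n 0) by rw [hQ0, hQm1]; norm_num)
  refine ⟨a, ha, fun x hx => ⟨fun hQx => hmono.injOn hx ha.le (hQx.trans hQa.symm), ?_⟩⟩
  rintro rfl
  exact hQa

theorem real_roots_count_P (n : ℕ) (hn : 2 ≤ n) :
    {x : ℝ | ((X : ℝ[X]) ^ n - ∑ i ∈ Finset.range n, (X : ℝ[X]) ^ i).eval x = 0}.ncard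
      = if Even n then 2 else 1 := by
  have hroots : {x : ℝ | ((X : ℝ[X]) ^ n - ∑ i ∈ Finset.range n, (X : ℝ[X]) ^ i).eval x = 0}
      = {x | Q n x = 0 ∧ x ≠ 1} := by
    ext x
    simp only [Set.mem_ofPred_eq, eval_sub, eval_pow, eval_X, eval_finsetSum,
      pow_sub_geom_sum_eq_zero_iff hn]
  obtain ⟨b, hb, hpos⟩ := exists_Q_eq_zero_iff_of_pos hn
  rw [hroots]
  split_ifs with he
  · obtain ⟨a, ha, hneg⟩ := exists_Q_eq_zero_iff_of_nonpos_of_even (by omega) he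
    rw [← Set.ncard_pair (show a ≠ b by linarith)]
    congr 1
    ext x
    rcases le_or_gt x 0 with hx | hx <;> grind
  · have ho := Nat.not_even_iff_odd.mp he
    rw [← Set.ncard_singleton b]
    congr 1
    ext x
    rcases le_or_gt x 0 with hx | hx
    · grind [Q_pos_of_odd ho hx]
    · grind
end

section
/- For n ≥ 3, the unique real root λₙ > 1 of Xⁿ = X^{n−1} + X^{n−2} + ⋯ + X + 1 is a Pisot number: every other complex root of this polynomial has absolute value strictly less than 1. -/
/-!
Multiplying by `X - 1`, a root `z` satisfies `z ^ (n + 1) + 1 = 2 * z ^ n`. If `r = ‖z‖ ≥ 1`, the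
triangle inequality applied to `z ^ n = ∑ z ^ i` gives `r ^ (n + 1) + 1 ≤ 2 * r ^ n`, while applied
to `z ^ (n + 1) + 1` it gives the reverse inequality. Equality in the triangle inequality forces
`z ^ (n + 1)` to be a nonnegative real, and then `z = r` is a positive real root. Positive real
roots are unique since `x ↦ ∑_{i=1}^n x⁻ⁱ` is strictly decreasing, so `z = λ`.
-/

open Finset

theorem pow_succ_add_one_eq_two_mul_pow {R : Type*} [CommRing R] {n : ℕ} {x : R}
    (h : x ^ n = ∑ i ∈ range n, x ^ i) : x ^ (n + 1) + 1 = 2 * x ^ n := by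
  linear_combination (x - 1) * h + geom_sum_mul x n

theorem pow_succ_add_one_le_two_mul_pow {R : Type*} [CommRing R] [LinearOrder R]
    [IsStrictOrderedRing R] {n : ℕ} {x : R} (hx : 1 ≤ x)
    (h : x ^ n ≤ ∑ i ∈ range n, x ^ i) : x ^ (n + 1) + 1 ≤ 2 * x ^ n := by
  have := mul_le_mul_of_nonneg_left h (sub_nonneg.2 hx)
  linear_combination this + geom_sum_mul x n

theorem Complex.eq_norm_of_norm_add_one {w : ℂ} (h : ‖w + 1‖ = ‖w‖ + 1) : w = ‖w‖ := by
  have := (norm_add_eq_iff_real (x := w) (y := 1)).1 (by simpa using h)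
  simpa [Complex.real_smul] using this

theorem eq_norm_of_geom_root_of_one_le_norm {n : ℕ} {z : ℂ}
    (hz : z ^ n = ∑ i ∈ range n, z ^ i) (hz1 : 1 ≤ ‖z‖) : z = ‖z‖ := by
  set r := ‖z‖
  have hr : r ^ n ≤ ∑ i ∈ range n, r ^ i :=
    calc r ^ n = ‖∑ i ∈ range n, z ^ i‖ := by rw [← hz, norm_pow]
      _ ≤ ∑ i ∈ range n, r ^ i := by simpa only [norm_pow] using norm_sum_le (range n) (z ^ ·)
  have hz2 := pow_succ_add_one_eq_two_mul_pow hz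
  have hnorm : ‖z ^ (n + 1) + 1‖ = 2 * r ^ n := by rw [hz2]; simp [r]
  have hr2 : r ^ (n + 1) + 1 = 2 * r ^ n := by
    refine le_antisymm (pow_succ_add_one_le_two_mul_pow hz1 hr) ?_
    simpa [hnorm, r] using norm_add_le (z ^ (n + 1)) 1
  have hpow_succ : z ^ (n + 1) = (r : ℂ) ^ (n + 1) := by
    have := Complex.eq_norm_of_norm_add_one (by rw [hnorm, norm_pow, hr2])
    rwa [norm_pow, Complex.ofReal_pow] at this
  have hpow : z ^ n = (r : ℂ) ^ n := by
    have hr2' : (r : ℂ) ^ (n + 1) + 1 = 2 * (r : ℂ) ^ n := by exact_mod_cast hr2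
    linear_combination (hpow_succ + hr2' - hz2) / 2
  have hr0 : (r : ℂ) ^ n ≠ 0 := pow_ne_zero n (by exact_mod_cast (one_pos.trans_le hz1).ne')
  refine mul_right_cancel₀ hr0 ?_
  rw [← pow_succ', ← hpow_succ, pow_succ', hpow]

theorem sum_range_inv_pow_succ_eq_one {K : Type*} [Field K] {n : ℕ} {x : K} (hx : x ≠ 0)
    (h : x ^ n = ∑ i ∈ range n, x ^ i) : ∑ i ∈ range n, x⁻¹ ^ (i + 1) = 1 := by
  refine mul_right_cancel₀ (pow_ne_zero n hx) ?_
  calc (∑ i ∈ range n, x⁻¹ ^ (i + 1)) * x ^ n = ∑ i ∈ range n, x ^ (n - 1 - i) := by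
        rw [sum_mul]
        refine sum_congr rfl fun i hi => ?_
        rw [inv_pow, mul_comm, ← pow_sub₀ x hx (mem_range.1 hi)]
        congr 1
        omega
    _ = 1 * x ^ n := by rw [sum_range_reflect (x ^ ·), h, one_mul]

theorem strictAntiOn_sum_inv_pow_succ {K : Type*} [Field K] [LinearOrder K]
    [IsStrictOrderedRing K] {n : ℕ} (hn : n ≠ 0) :
    StrictAntiOn (fun x : K => ∑ i ∈ range n, x⁻¹ ^ (i + 1)) (Set.Ioi 0) := by
  intro x hx y hy hxy
  refine sum_lt_sum_of_nonempty (nonempty_range_iff.2 hn) fun i _ => ?_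
  exact pow_lt_pow_left₀ (inv_strictAnti₀ hx hxy) (inv_nonneg.2 (le_of_lt hy)) i.succ_ne_zero

theorem eq_of_pos_of_pow_eq_sum_range_pow {K : Type*} [Field K] [LinearOrder K]
    [IsStrictOrderedRing K] {n : ℕ} {x y : K} (hx : 0 < x) (hy : 0 < y)
    (hxn : x ^ n = ∑ i ∈ range n, x ^ i) (hyn : y ^ n = ∑ i ∈ range n, y ^ i) : x = y := by
  have hn : n ≠ 0 := by rintro rfl; simp at hxn
  refine (strictAntiOn_sum_inv_pow_succ hn).injOn hx hy ?_
  simp only [sum_range_inv_pow_succ_eq_one hx.ne' hxn, sum_range_inv_pow_succ_eq_one hy.ne' hyn]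

theorem arnoux_yoccoz_root_is_pisot_general (n : ℕ)
    (lam : ℝ) (hlam : 1 < lam) (hroot : lam ^ n = ∑ i ∈ Finset.range n, lam ^ i) :
    ∀ z : ℂ, z ^ n = ∑ i ∈ Finset.range n, z ^ i → z ≠ (lam : ℂ) → ‖z‖ < 1 := by
  intro z hz hz_ne
  by_contra! hz1
  have hz_real := eq_norm_of_geom_root_of_one_le_norm hz hz1
  have hnorm_root : ‖z‖ ^ n = ∑ i ∈ range n, ‖z‖ ^ i := by
    rw [hz_real] at hz
    exact_mod_cast hz
  refine hz_ne ?_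
  rw [hz_real, eq_of_pos_of_pow_eq_sum_range_pow (one_pos.trans_le hz1) (one_pos.trans hlam)
    hnorm_root hroot]

theorem arnoux_yoccoz_root_is_pisot (n : ℕ) (hn : 3 ≤ n)
    (lam : ℝ) (hlam : 1 < lam) (hroot : lam ^ n = ∑ i ∈ Finset.range n, lam ^ i) :
    ∀ z : ℂ, z ^ n = ∑ i ∈ Finset.range n, z ^ i → z ≠ (lam : ℂ) → ‖z‖ < 1 :=
  arnoux_yoccoz_root_is_pisot_general n lam hlam hroot
end

section
/- Let A be a real square matrix with nonnegative entries such that some power of A has strictly positive entries (A is primitive), and suppose A x⃗ = t x⃗ for some nonzero vector x⃗ with nonnegative entries and some real t > 0. Then t equals the Perron–Frobenius eigenvalue of A, i.e., t is the spectral radius of A. -/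
/-!
Primitivity makes the nonnegative eigenvector `x` strictly positive, since `A ^ k *ᵥ x = t ^ k • x`
has positive entries. If `A v = z v` over `ℂ`, the triangle inequality gives `‖z‖ |v| ≤ A |v|`
entrywise. Scaling `x` by `c = max |vⱼ| / xⱼ`, attained at `j`, we get `|v| ≤ c x` with equality at
`j`, so `‖z‖ c xⱼ ≤ (A |v|)ⱼ ≤ c (A x)ⱼ = t c xⱼ`, i.e. `‖z‖ ≤ t`.
-/

open Matrix

namespace Matrix

variable {n : Type*} [Fintype n]

theorem isRoot_charpoly_iff_exists_mulVec_eq_smul {R : Type*} [CommRing R] [IsDomain R]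
    [DecidableEq n] (A : Matrix n n R) (μ : R) :
    A.charpoly.IsRoot μ ↔ ∃ v ≠ 0, A *ᵥ v = μ • v := by
  rw [← charpoly_toLin', ← Module.End.hasEigenvalue_iff_isRoot_charpoly]
  constructor
  · intro h
    obtain ⟨v, hv⟩ := h.exists_hasEigenvector
    exact ⟨v, hv.2, hv.apply_eq_smul⟩
  · rintro ⟨v, hv0, hv⟩
    exact Module.End.hasEigenvalue_of_hasEigenvector ⟨Module.End.mem_eigenspace_iff.2 hv, hv0⟩

theorem pow_mulVec_eq_smul_of_mulVec_eq_smul {R : Type*} [CommSemiring R] [DecidableEq n]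
    {A : Matrix n n R} {x : n → R} {t : R} (h : A *ᵥ x = t • x) (k : ℕ) :
    A ^ k *ᵥ x = t ^ k • x := by
  induction k with
  | zero => simp
  | succ k ih => rw [pow_succ', ← mulVec_mulVec, ih, mulVec_smul, h, smul_smul, pow_succ]

section Positivity

variable {R : Type*} [CommRing R] [PartialOrder R] [IsStrictOrderedRing R]

theorem mulVec_apply_pos {M : Matrix n n R} (hM : ∀ i j, 0 < M i j) {x : n → R}
    (hx0 : x ≠ 0) (hxnn : 0 ≤ x) (i : n) : 0 < (M *ᵥ x) i := by
  obtain ⟨j, hj⟩ := (Pi.lt_def.1 (hxnn.lt_of_ne' hx0)).2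
  exact Finset.sum_pos' (fun l _ => mul_nonneg (hM i l).le (hxnn l))
    ⟨j, Finset.mem_univ j, mul_pos (hM i j) hj⟩

theorem pos_of_mulVec_eq_smul_of_pow_pos [DecidableEq n] {A : Matrix n n R} {k : ℕ}
    (hk : ∀ i j, 0 < (A ^ k) i j) {x : n → R} (hx0 : x ≠ 0) (hxnn : 0 ≤ x) {t : R}
    (heig : A *ᵥ x = t • x) (i : n) : 0 < x i := by
  have hpos := mulVec_apply_pos hk hx0 hxnn i
  rw [pow_mulVec_eq_smul_of_mulVec_eq_smul heig, Pi.smul_apply, smul_eq_mul] at hpos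
  exact (hxnn i).lt_of_ne fun h => by simp [← h] at hpos

end Positivity

theorem le_of_smul_le_mulVec_of_mulVec_eq_smul {𝕜 : Type*} [Field 𝕜] [LinearOrder 𝕜]
    [IsStrictOrderedRing 𝕜] {A : Matrix n n 𝕜} (hA : ∀ i j, 0 ≤ A i j)
    {x : n → 𝕜} (hxpos : ∀ i, 0 < x i) {t : 𝕜} (heig : A *ᵥ x = t • x)
    {w : n → 𝕜} (hw0 : w ≠ 0) (hwnn : 0 ≤ w) {s : 𝕜} (hsub : s • w ≤ A *ᵥ w) : s ≤ t := by
  obtain ⟨i₀, hi₀⟩ := (Pi.lt_def.1 (hwnn.lt_of_ne' hw0)).2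
  have : Nonempty n := ⟨i₀⟩
  obtain ⟨j, hj⟩ := Finite.exists_max fun i => w i / x i
  set c := w j / x j
  have hc : 0 < c := (div_pos hi₀ (hxpos i₀)).trans_le (hj i₀)
  have hwc : w ≤ c • x := fun i => (div_le_iff₀ (hxpos i)).1 (hj i)
  have hwj : w j = c * x j := (div_mul_cancel₀ _ (hxpos j).ne').symm
  have key : s * (c * x j) ≤ t * (c * x j) := calc
    s * (c * x j) = (s • w) j := by rw [Pi.smul_apply, smul_eq_mul, hwj]
    _ ≤ (A *ᵥ w) j := hsub j
    _ ≤ (A *ᵥ (c • x)) j := dotProduct_le_dotProduct_of_nonneg_left hwc (hA j)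
    _ = t * (c * x j) := by
      rw [mulVec_smul, heig, Pi.smul_apply, Pi.smul_apply, smul_eq_mul, smul_eq_mul]; ring
  exact le_of_mul_le_mul_right key (mul_pos hc (hxpos j))

theorem norm_smul_le_mulVec_norm {A : Matrix n n ℝ} (hA : ∀ i j, 0 ≤ A i j) {v : n → ℂ}
    {z : ℂ} (h : A.map Complex.ofReal *ᵥ v = z • v) :
    ‖z‖ • (fun i => ‖v i‖) ≤ A *ᵥ fun i => ‖v i‖ := fun i => calc
  ‖z‖ * ‖v i‖ = ‖∑ j, (A i j : ℂ) * v j‖ := by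
    rw [← norm_mul, ← smul_eq_mul, ← Pi.smul_apply z v, ← h]; rfl
  _ ≤ ∑ j, ‖(A i j : ℂ) * v j‖ := norm_sum_le _ _
  _ = (A *ᵥ fun i => ‖v i‖) i := by
    simp only [norm_mul, Complex.norm_of_nonneg (hA i _)]; rfl

end Matrix

theorem perron_frobenius_eigenvalue_of_nonneg_eigenvector_general
    (r : ℕ) (A : Matrix (Fin r) (Fin r) ℝ)
    (hA : ∀ i j, 0 ≤ A i j) (hprim : ∃ k : ℕ, ∀ i j, 0 < (A ^ k) i j)
    (x : Fin r → ℝ) (hx0 : x ≠ 0) (hxnn : ∀ i, 0 ≤ x i)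
    (t : ℝ) (heig : A.mulVec x = t • x) :
    (A.map (Complex.ofReal)).charpoly.IsRoot (t : ℂ) ∧
      ∀ z : ℂ, (A.map (Complex.ofReal)).charpoly.IsRoot z → ‖z‖ ≤ t := by
  obtain ⟨k, hk⟩ := hprim
  have hxpos := pos_of_mulVec_eq_smul_of_pow_pos hk hx0 hxnn heig
  refine ⟨?_, fun z hz => ?_⟩
  · rw [show A.map Complex.ofReal = A.map Complex.ofRealHom from rfl, charpoly_map]
    exact ((isRoot_charpoly_iff_exists_mulVec_eq_smul A t).2 ⟨x, hx0, heig⟩).map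
  obtain ⟨v, hv0, hv⟩ := (isRoot_charpoly_iff_exists_mulVec_eq_smul _ z).1 hz
  have hw0 : (fun i => ‖v i‖) ≠ 0 := fun h => hv0 (funext fun i => norm_eq_zero.1 (congrFun h i))
  exact le_of_smul_le_mulVec_of_mulVec_eq_smul hA hxpos heig hw0 (fun i => norm_nonneg _)
    (norm_smul_le_mulVec_norm hA hv)

theorem perron_frobenius_eigenvalue_of_nonneg_eigenvector
    (r : ℕ) (A : Matrix (Fin r) (Fin r) ℝ)
    (hA : ∀ i j, 0 ≤ A i j) (hprim : ∃ k : ℕ, ∀ i j, 0 < (A ^ k) i j)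
    (x : Fin r → ℝ) (hx0 : x ≠ 0) (hxnn : ∀ i, 0 ≤ x i)
    (t : ℝ) (ht : 0 < t) (heig : A.mulVec x = t • x) :
    (A.map (Complex.ofReal)).charpoly.IsRoot (t : ℂ) ∧
      ∀ z : ℂ, (A.map (Complex.ofReal)).charpoly.IsRoot z → ‖z‖ ≤ t :=
  perron_frobenius_eigenvalue_of_nonneg_eigenvector_general r A hA hprim x hx0 hxnn t heig
end

section
/- Let t be a real algebraic number such that t is an eigenvalue of a matrix of the form E Dₙ Eᵀ Dₘ with E an integer matrix and Dₙ, Dₘ positive integer diagonal matrices. Then for every embedding σ : ℚ(t) → ℂ, σ(2 + t) is real; in particular the trace 2 + t of the hyperbolic element P_h P_v generates a totally real field ℚ(2 + t) = ℚ(t). -/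
/-!
Write `M = E Dₙ Eᵀ Dₘ = A B` with `A = E Dₙ Eᵀ` symmetric and `B = Dₘ` positive definite. If
`A B v = μ v` with `v ≠ 0`, then `μ ⟪v, B v⟫ = ⟪B v, A (B v)⟫`; both forms are real and the first
is positive, so `μ` is real. Every conjugate of `t` is a root of the integer polynomial
`charpoly M`, hence real, and the conjugates of `2 + t` are those of `t` shifted by `2`.
-/

open Matrix Polynomial
open scoped ComplexOrder IntermediateField

namespace Matrix

variable {𝕜 : Type*} [RCLike 𝕜] {n : Type*} [Fintype n]

theorem IsHermitian.im_eq_zero_of_mul_posDef_mulVec_eq_smul {A B : Matrix n n 𝕜}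
    (hA : A.IsHermitian) (hB : B.PosDef) {μ : 𝕜} {v : n → 𝕜} (hv : v ≠ 0)
    (hμ : (A * B) *ᵥ v = μ • v) : RCLike.im μ = 0 := by
  have hform : star (B *ᵥ v) ⬝ᵥ A *ᵥ (B *ᵥ v) = μ * (star v ⬝ᵥ B *ᵥ v) := by
    rw [star_mulVec, hB.isHermitian.eq, ← dotProduct_mulVec, mulVec_mulVec v A B, hμ,
      mulVec_smul, dotProduct_smul, smul_eq_mul]
  have hq := RCLike.pos_iff.mp (hB.dotProduct_mulVec_pos hv)
  have him := hA.im_star_dotProduct_mulVec_self (B *ᵥ v)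
  rw [hform, RCLike.mul_im, hq.2, mul_zero, zero_add] at him
  exact (mul_eq_zero.mp him).resolve_right hq.1.ne'

variable [DecidableEq n]

theorem IsHermitian.im_eq_zero_of_isRoot_charpoly_mul_posDef {A B : Matrix n n 𝕜}
    (hA : A.IsHermitian) (hB : B.PosDef) {μ : 𝕜} (hμ : (A * B).charpoly.IsRoot μ) :
    RCLike.im μ = 0 := by
  rw [← charpoly_toLin', ← Module.End.hasEigenvalue_iff_isRoot_charpoly] at hμ
  obtain ⟨v, hv⟩ := hμ.exists_hasEigenvector
  exact hA.im_eq_zero_of_mul_posDef_mulVec_eq_smul hB hv.2 hv.apply_eq_smul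

end Matrix

theorem im_eq_zero_of_isRoot_charpoly_mul_diagonal {r s : ℕ} (E : Matrix (Fin r) (Fin s) ℤ)
    (n : Fin s → ℤ) {m : Fin r → ℤ} (hm : ∀ i, 0 < m i) {z : ℂ}
    (hz : ((E * diagonal n * Eᵀ * diagonal m).map (Int.cast : ℤ → ℂ)).charpoly.IsRoot z) :
    z.im = 0 := by
  have hA : ((E * diagonal n * Eᵀ).map (Int.cast : ℤ → ℂ)).IsHermitian := by
    refine IsHermitian.map ?_ _ fun k => by simp
    simpa [conjTranspose_eq_transpose_of_trivial] using
      isHermitian_mul_mul_conjTranspose E (isHermitian_diagonal n)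
  have hB : ((diagonal m).map (Int.cast : ℤ → ℂ)).PosDef := by
    rw [diagonal_map Int.cast_zero]
    exact .diagonal fun i => Int.cast_pos.mpr (hm i)
  rw [show (E * diagonal n * Eᵀ * diagonal m).map (Int.cast : ℤ → ℂ) = _ from
    Matrix.map_mul (f := Int.castRingHom ℂ)] at hz
  exact hA.im_eq_zero_of_isRoot_charpoly_mul_posDef hB hz

theorem aeval_eq_zero_of_aeval_minpoly_eq_zero {K L : Type*} [Field K] [Algebra ℚ K]
    [CommRing L] [Algebra ℚ L] {p : ℤ[X]} {x : K} (hx : aeval x p = 0) {z : L}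
    (hz : aeval z (minpoly ℚ x) = 0) : aeval z p = 0 := by
  obtain ⟨q, hq⟩ := minpoly.dvd ℚ x (p := p.map (algebraMap ℤ ℚ)) (by rwa [aeval_map_algebraMap])
  rw [← aeval_map_algebraMap ℚ, hq, map_mul, hz, zero_mul]

theorem IntermediateField.adjoin_simple_add_algebraMap {K L : Type*} [Field K] [Field L]
    [Algebra K L] (x : L) (a : K) : K⟮x + algebraMap K L a⟯ = K⟮x⟯ := by
  refine le_antisymm (adjoin_simple_le_iff.mpr ?_) (adjoin_simple_le_iff.mpr ?_)
  · exact add_mem (mem_adjoin_simple_self K x) (algebraMap_mem _ a)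
  · simpa using sub_mem (mem_adjoin_simple_self K (x + algebraMap K L a)) (algebraMap_mem _ a)

theorem trace_field_of_thurston_veech_hyperbolic_totally_real
    (t : ℝ)
    (ht : ∃ (r s : ℕ) (E : Matrix (Fin r) (Fin s) ℤ) (n : Fin s → ℤ) (m : Fin r → ℤ),
      (∀ j, 0 < n j) ∧ (∀ i, 0 < m i) ∧
      ((E * diagonal n * Eᵀ * diagonal m).map (Int.cast : ℤ → ℝ)).charpoly.IsRoot t) :
    (∀ z : ℂ, Polynomial.aeval z (minpoly ℚ (2 + t)) = 0 → z.im = 0) ∧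
      IntermediateField.adjoin ℚ {(2 + t : ℝ)} = IntermediateField.adjoin ℚ {t} := by
  obtain ⟨r, s, E, n, m, -, hm, hroot⟩ := ht
  have h2t : 2 + t = t + algebraMap ℚ ℝ 2 := by rw [add_comm, map_ofNat]
  refine ⟨fun z hz => ?_, h2t ▸ IntermediateField.adjoin_simple_add_algebraMap t (2 : ℚ)⟩
  rw [h2t, minpoly.add_algebraMap, aeval_comp] at hz
  simp only [map_sub, aeval_X, map_ofNat] at hz
  have ht : aeval t (E * diagonal n * Eᵀ * diagonal m).charpoly = 0 := by
    rw [← eval_map_algebraMap, algebraMap_int_eq, ← charpoly_map]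
    exact hroot
  have hshift := aeval_eq_zero_of_aeval_minpoly_eq_zero ht hz
  rw [← eval_map_algebraMap, algebraMap_int_eq, ← charpoly_map] at hshift
  simpa using im_eq_zero_of_isRoot_charpoly_mul_diagonal E n hm hshift
end
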